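/- Let θ > 0, a > 0, μ > 0 and h > 0; set θ̃ = (1+a)θ, μ̃ = μ/(1+a) and σ = √(2θa). Let ξ ~ N(0,h). Then the one-step LT scheme for the inhomogeneous geometric Brownian motion started at x > 0, namely X^{LT} = (μ̃ + e^{−θ̃h}(x − μ̃))·e^{σξ}, satisfies E[X^{LT}] = e^{−θh}x + μ̃(e^{θah} − e^{−θh}). Moreover, for the chain X₀ = x₀ > 0, X_{k+1} = (μ̃ + e^{−θ̃h}(X_k − μ̃))·e^{σξ_k} with i.i.d. ξ_k ~ N(0,h), for every n ≥ 1: E[X_n] = e^{−θnh}x₀ + μ̃(e^{θah} − e^{−θh})·(1 − e^{−θnh})/(1 − e^{−θh}). -/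

import Mathlib

open MeasureTheory ProbabilityTheory

/-! Since `X k` is a measurable function of `ξ 0, …, ξ (k - 1)`, it is independent of `ξ k`, so
the mean of a step factors as `E[φ(X k)] · E[exp(σ ξ k)] = φ(E[X k]) · e^{θah}` with `φ` the affine
linear flow. As `e^{-(1+a)θh} e^{θah} = e^{-θh}`, the means obey the affine recursion
`m_{k+1} = e^{-θh} m_k + μ̃ (e^{θah} - e^{-θh})`, which is summed as a geometric series. -/

theorem eq_pow_mul_add_of_affine_recurrence {K : Type*} [Field K] {m : ℕ → K} {r c : K}
    (hr : r ≠ 1) (hm : ∀ k, m (k + 1) = r * m k + c) (n : ℕ) :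
    m n = r ^ n * m 0 + c * (1 - r ^ n) / (1 - r) := by
  have hr' : 1 - r ≠ 0 := sub_ne_zero.mpr hr.symm
  induction n with
  | zero => simp
  | succ n ih =>
    rw [hm, ih]
    field_simp
    ring

section Recursion

variable {Ω β γ : Type*} {mΩ : MeasurableSpace Ω} [mβ : MeasurableSpace β] [MeasurableSpace γ]

theorem measurable_iSup_comap_of_recursion {ξ : ℕ → Ω → β} {X : ℕ → Ω → γ}
    {g : γ → β → γ} (hg : Measurable (Function.uncurry g)) {x₀ : γ}
    (hX0 : ∀ ω, X 0 ω = x₀) (hX : ∀ k ω, X (k + 1) ω = g (X k ω) (ξ k ω)) (k : ℕ) :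
    Measurable[⨆ i ∈ Set.Iio k, mβ.comap (ξ i)] (X k) := by
  induction k with
  | zero =>
    rw [funext hX0]
    exact measurable_const
  | succ k ih =>
    have hX_le : (⨆ i ∈ Set.Iio k, mβ.comap (ξ i)) ≤ ⨆ i ∈ Set.Iio (k + 1), mβ.comap (ξ i) :=
      biSup_mono fun i hi => lt_trans hi (Nat.lt_succ_self k)
    have hξ_le : mβ.comap (ξ k) ≤ ⨆ i ∈ Set.Iio (k + 1), mβ.comap (ξ i) :=
      le_biSup (fun i => mβ.comap (ξ i)) (Nat.lt_succ_self k)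
    rw [funext (hX k)]
    exact hg.comp ((ih.mono hX_le le_rfl).prodMk
      ((comap_measurable (ξ k)).mono hξ_le le_rfl))

theorem ProbabilityTheory.iIndepFun.indepFun_of_measurable_iSup_comap_Iio {P : Measure Ω}
    {ξ : ℕ → Ω → β} (hξ : ∀ k, Measurable (ξ k)) (hind : iIndepFun ξ P) {Y : Ω → γ} {k : ℕ}
    (hY : Measurable[⨆ i ∈ Set.Iio k, mβ.comap (ξ i)] Y) : IndepFun Y (ξ k) P := by
  have h := indep_iSup_of_disjoint (fun i => (hξ i).comap_le)
    ((iIndepFun_iff_iIndep _ _ _).mp hind)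
    (Set.disjoint_singleton_right.mpr (lt_irrefl k) : Disjoint (Set.Iio k) {k})
  rw [iSup_singleton] at h
  exact indep_of_indep_of_le_left h hY.comap_le

end Recursion

/-- The exact flow `φ_h^{[1]}(x) = μ̃ + e^{-θ̃h}(x - μ̃)` of the linear ODE, with `θ̃ = (1+a)θ` and
`μ̃ = μ/(1+a)`. -/
noncomputable def igbmLinearFlow (θ a μ h x : ℝ) : ℝ :=
  μ / (1 + a) + Real.exp (-((1 + a) * θ) * h) * (x - μ / (1 + a))

noncomputable def igbmLTStep (θ a μ h x z : ℝ) : ℝ :=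
  igbmLinearFlow θ a μ h x * Real.exp (Real.sqrt (2 * θ * a) * z)

theorem measurable_igbmLinearFlow (θ a μ h : ℝ) : Measurable (igbmLinearFlow θ a μ h) := by
  unfold igbmLinearFlow
  fun_prop

theorem measurable_igbmLTStep (θ a μ h : ℝ) :
    Measurable (Function.uncurry (igbmLTStep θ a μ h)) := by
  unfold igbmLTStep igbmLinearFlow
  fun_prop

theorem igbmLinearFlow_mul_exp (θ a μ h x : ℝ) :
    igbmLinearFlow θ a μ h x * Real.exp (θ * a * h)
      = Real.exp (-θ * h) * x + μ / (1 + a) * (Real.exp (θ * a * h) - Real.exp (-θ * h)) := by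
  have h_exp : Real.exp (-((1 + a) * θ) * h) * Real.exp (θ * a * h) = Real.exp (-θ * h) := by
    rw [← Real.exp_add]; ring_nf
  unfold igbmLinearFlow
  linear_combination (x - μ / (1 + a)) * h_exp

section Moments

variable {Ω : Type*} {mΩ : MeasurableSpace Ω} {P : Measure Ω} {θ a μ h : ℝ} {Y Z : Ω → ℝ}

theorem mgf_sqrt_two_mul_eq_exp (hθa : 0 ≤ θ * a) (hh : 0 ≤ h)
    (hZ : P.map Z = gaussianReal 0 h.toNNReal) :
    mgf Z P (Real.sqrt (2 * θ * a)) = Real.exp (θ * a * h) := by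
  rw [mgf_gaussianReal hZ, Real.sq_sqrt (by linarith), Real.coe_toNNReal h hh]
  ring_nf

theorem ProbabilityTheory.IndepFun.igbmLinearFlow_exp (hYZ : IndepFun Y Z P) :
    IndepFun (fun ω => igbmLinearFlow θ a μ h (Y ω))
      (fun ω => Real.exp (Real.sqrt (2 * θ * a) * Z ω)) P :=
  hYZ.comp (ψ := fun z => Real.exp (Real.sqrt (2 * θ * a) * z))
    (measurable_igbmLinearFlow θ a μ h) (by fun_prop)

theorem integrable_exp_mul_of_map_eq_gaussianReal [NeZero P] {m : ℝ} {v : NNReal}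
    (hZ : P.map Z = gaussianReal m v) (t : ℝ) :
    Integrable (fun ω => Real.exp (t * Z ω)) P :=
  mgf_pos_iff.mp (by rw [mgf_gaussianReal hZ]; positivity)

variable [IsProbabilityMeasure P]

theorem MeasureTheory.Integrable.igbmLinearFlow (hY : Integrable Y P) :
    Integrable (fun ω => igbmLinearFlow θ a μ h (Y ω)) P :=
  (integrable_const _).add ((hY.sub (integrable_const _)).const_mul _)

theorem integral_igbmLinearFlow (hY : Integrable Y P) :
    ∫ ω, igbmLinearFlow θ a μ h (Y ω) ∂P = igbmLinearFlow θ a μ h (∫ ω, Y ω ∂P) := by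
  have hY_sub : Integrable (fun ω => Y ω - μ / (1 + a)) P := hY.sub (integrable_const _)
  unfold igbmLinearFlow
  rw [integral_add (integrable_const _) (hY_sub.const_mul _), integral_const_mul,
    integral_sub hY (integrable_const _)]
  simp

theorem ProbabilityTheory.IndepFun.integrable_igbmLTStep (hYZ : IndepFun Y Z P)
    (hY : Integrable Y P)
    (hZ : P.map Z = gaussianReal 0 h.toNNReal) :
    Integrable (fun ω => igbmLTStep θ a μ h (Y ω) (Z ω)) P :=
  hYZ.igbmLinearFlow_exp.integrable_mul hY.igbmLinearFlow
    (integrable_exp_mul_of_map_eq_gaussianReal hZ _)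

theorem ProbabilityTheory.IndepFun.integral_igbmLTStep (hYZ : IndepFun Y Z P)
    (hY : Integrable Y P)
    (hZ : P.map Z = gaussianReal 0 h.toNNReal) (hθa : 0 ≤ θ * a) (hh : 0 ≤ h) :
    ∫ ω, igbmLTStep θ a μ h (Y ω) (Z ω) ∂P
      = Real.exp (-θ * h) * ∫ ω, Y ω ∂P
        + μ / (1 + a) * (Real.exp (θ * a * h) - Real.exp (-θ * h)) := by
  rw [← igbmLinearFlow_mul_exp, ← integral_igbmLinearFlow hY,
    ← mgf_sqrt_two_mul_eq_exp hθa hh hZ]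
  exact hYZ.igbmLinearFlow_exp.integral_fun_mul_eq_mul_integral
    hY.igbmLinearFlow.aestronglyMeasurable
    (integrable_exp_mul_of_map_eq_gaussianReal hZ _).aestronglyMeasurable

end Moments

theorem igbm_LT_means_general
    {Ω : Type*} [MeasurableSpace Ω] (P : Measure Ω) [IsProbabilityMeasure P]
    (θ a μ h x x₀ : ℝ) (hθ : 0 < θ) (ha : 0 < a) (hh : 0 < h)
    (ξ : ℕ → Ω → ℝ) (hmeas : ∀ k, Measurable (ξ k))
    (hindep : iIndepFun ξ P)
    (hlaw : ∀ k, Measure.map (ξ k) P = gaussianReal 0 h.toNNReal)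
    (X : ℕ → Ω → ℝ)
    (hX0 : ∀ ω, X 0 ω = x₀)
    (hXstep : ∀ k ω, X (k + 1) ω =
      (μ / (1 + a) + Real.exp (-((1 + a) * θ) * h) * (X k ω - μ / (1 + a)))
        * Real.exp (Real.sqrt (2 * θ * a) * ξ k ω)) :
    (∫ z, (μ / (1 + a) + Real.exp (-((1 + a) * θ) * h) * (x - μ / (1 + a)))
            * Real.exp (Real.sqrt (2 * θ * a) * z) ∂(gaussianReal 0 h.toNNReal))
        = Real.exp (-θ * h) * x
          + (μ / (1 + a)) * (Real.exp (θ * a * h) - Real.exp (-θ * h))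
      ∧ ∀ n : ℕ, 1 ≤ n →
          (∫ ω, X n ω ∂P)
            = Real.exp (-θ * n * h) * x₀
              + (μ / (1 + a)) * (Real.exp (θ * a * h) - Real.exp (-θ * h))
                * (1 - Real.exp (-θ * n * h)) / (1 - Real.exp (-θ * h)) := by
  have hθa : 0 ≤ θ * a := (mul_pos hθ ha).le
  have hX_step : ∀ k, X (k + 1) = fun ω => igbmLTStep θ a μ h (X k ω) (ξ k ω) :=
    fun k => funext (hXstep k)
  have hX_indep : ∀ k, IndepFun (X k) (ξ k) P := fun k =>
    hindep.indepFun_of_measurable_iSup_comap_Iio hmeas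
      (measurable_iSup_comap_of_recursion (measurable_igbmLTStep θ a μ h) hX0 hXstep k)
  have hX_int : ∀ k, Integrable (X k) P := by
    intro k
    induction k with
    | zero => rw [funext hX0]; exact integrable_const x₀
    | succ k ih => rw [hX_step]; exact (hX_indep k).integrable_igbmLTStep ih (hlaw k)
  have hX_mean : ∀ k, ∫ ω, X (k + 1) ω ∂P
      = Real.exp (-θ * h) * ∫ ω, X k ω ∂P
        + μ / (1 + a) * (Real.exp (θ * a * h) - Real.exp (-θ * h)) := fun k => by
    rw [hX_step]; exact (hX_indep k).integral_igbmLTStep (hX_int k) (hlaw k) hθa hh.le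
  have hr : Real.exp (-θ * h) ≠ 1 := (Real.exp_lt_one_iff.mpr (by nlinarith)).ne
  have hr_pow (n : ℕ) : Real.exp (-θ * n * h) = Real.exp (-θ * h) ^ n := by
    rw [← Real.exp_nat_mul]; ring_nf
  refine ⟨?_, fun n _ => ?_⟩
  · have h_one := (indepFun_const_left x id).integral_igbmLTStep (μ := μ) (integrable_const x)
      Measure.map_id hθa hh.le
    rwa [integral_const, probReal_univ, one_smul] at h_one
  · rw [eq_pow_mul_add_of_affine_recurrence (m := fun k => ∫ ω, X k ω ∂P) hr hX_mean n,
      funext hX0, integral_const, probReal_univ, one_smul, hr_pow]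

/-- One-step and global conditional means of the Lie–Trotter scheme for the
inhomogeneous geometric Brownian motion: with `θ̃ = (1+a)θ`, `μ̃ = μ/(1+a)`,
`σ = √(2θa)` and `ξ ~ N(0,h)`, the one-step scheme
`X^{LT} = (μ̃ + e^{−θ̃h}(x − μ̃)) e^{σξ}` has mean `e^{−θh} x + μ̃(e^{θah} − e^{−θh})`,
and the chain `X₀ = x₀`, `X_{k+1} = (μ̃ + e^{−θ̃h}(X_k − μ̃)) e^{σξ_k}` with i.i.d.
`ξ_k ~ N(0,h)` has mean
`E[X_n] = e^{−θnh} x₀ + μ̃(e^{θah} − e^{−θh})(1 − e^{−θnh})/(1 − e^{−θh})` for `n ≥ 1`. -/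
theorem igbm_LT_means
    {Ω : Type*} [MeasurableSpace Ω] (P : Measure Ω) [IsProbabilityMeasure P]
    (θ a μ h x x₀ : ℝ) (hθ : 0 < θ) (ha : 0 < a) (hμ : 0 < μ) (hh : 0 < h)
    (hx : 0 < x) (hx₀ : 0 < x₀)
    (ξ : ℕ → Ω → ℝ) (hmeas : ∀ k, Measurable (ξ k))
    (hindep : iIndepFun ξ P)
    (hlaw : ∀ k, Measure.map (ξ k) P = gaussianReal 0 h.toNNReal)
    (X : ℕ → Ω → ℝ)
    (hX0 : ∀ ω, X 0 ω = x₀)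
    (hXstep : ∀ k ω, X (k + 1) ω =
      (μ / (1 + a) + Real.exp (-((1 + a) * θ) * h) * (X k ω - μ / (1 + a)))
        * Real.exp (Real.sqrt (2 * θ * a) * ξ k ω)) :
    (∫ z, (μ / (1 + a) + Real.exp (-((1 + a) * θ) * h) * (x - μ / (1 + a)))
            * Real.exp (Real.sqrt (2 * θ * a) * z) ∂(gaussianReal 0 h.toNNReal))
        = Real.exp (-θ * h) * x
          + (μ / (1 + a)) * (Real.exp (θ * a * h) - Real.exp (-θ * h))
      ∧ ∀ n : ℕ, 1 ≤ n →
          (∫ ω, X n ω ∂P)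
            = Real.exp (-θ * n * h) * x₀
              + (μ / (1 + a)) * (Real.exp (θ * a * h) - Real.exp (-θ * h))
                * (1 - Real.exp (-θ * n * h)) / (1 - Real.exp (-θ * h)) :=
  igbm_LT_means_general P θ a μ h x x₀ hθ ha hh ξ hmeas hindep hlaw X hX0 hXstep
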